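/- arXiv:0803.1439 — 6 statements merged into one kernel-verified Lean document; each statement's English description precedes it below -/
import Mathlib

section
/- A regular time scale T satisfies: the point x_* = min T (if it exists) is right-dense, the point x^* = max T (if it exists) is left-dense, and every other point of T is either two-sided dense or two-sided scattered. Conversely, any time scale satisfying these conditions is regular. -/
open Filter Topology
open scoped Classical

/-- Forward jump operator of a time scale `T ⊆ ℝ` (with the convention
`σ(max T) = max T`). -/
noncomputable def tsSigma (T : Set ℝ) (x : ℝ) : ℝ :=
  if ({y ∈ T | x < y}).Nonempty then sInf {y ∈ T | x < y} else x

/-- Backward jump operator. -/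
noncomputable def tsRho (T : Set ℝ) (x : ℝ) : ℝ :=
  if ({y ∈ T | y < x}).Nonempty then sSup {y ∈ T | y < x} else x

/-- Graininess function `μ(x) = σ(x) − x`. -/
noncomputable def tsMu (T : Set ℝ) (x : ℝ) : ℝ := tsSigma T x - x

/-- `T^κ`: the time scale with a possible left-scattered maximum removed. -/
def Tkappa (T : Set ℝ) : Set ℝ := T \ {x | IsGreatest T x ∧ tsRho T x < x}

/-- `T_κ`: the time scale with a possible right-scattered minimum removed. -/
def TkappaLow (T : Set ℝ) : Set ℝ := T \ {x | IsLeast T x ∧ x < tsSigma T x}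

/-- `f` has delta derivative `L` at `x`: the limit as `s → x` within `T`
(`s ≠ σ(x)`) of `(f(σ(x)) − f(s))/(σ(x) − s)` is `L`. -/
def HasDeltaDerivAt (T : Set ℝ) (f : ℝ → ℝ) (x L : ℝ) : Prop :=
  Filter.Tendsto (fun s => (f (tsSigma T x) - f s) / (tsSigma T x - s))
    (nhdsWithin x (T \ {tsSigma T x})) (nhds L)

/-- `f` has nabla derivative `L` at `x`: the limit as `s → x` within `T`
(`s ≠ ρ(x)`) of `(f(s) − f(ρ(x)))/(s − ρ(x))` is `L`. -/
def HasNablaDerivAt (T : Set ℝ) (f : ℝ → ℝ) (x L : ℝ) : Prop :=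
  Filter.Tendsto (fun s => (f s - f (tsRho T x)) / (s - tsRho T x))
    (nhdsWithin x (T \ {tsRho T x})) (nhds L)

/-- A regular time scale: `σ∘ρ = ρ∘σ = id` on `T`. -/
def TsRegular (T : Set ℝ) : Prop :=
  ∀ x ∈ T, tsSigma T (tsRho T x) = x ∧ tsRho T (tsSigma T x) = x

lemma ts_sigma_ge (T : Set ℝ) (x : ℝ) : x ≤ tsSigma T x := by
  unfold tsSigma
  split
  · exact le_csInf ‹_› (fun y hy => hy.2.le)
  · exact le_refl x

lemma ts_rho_le (T : Set ℝ) (x : ℝ) : tsRho T x ≤ x := by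
  unfold tsRho
  split
  · exact csSup_le ‹_› (fun y hy => hy.2.le)
  · exact le_refl x

lemma ts_sigma_eq_of_greatest {T : Set ℝ} {x : ℝ} (h : IsGreatest T x) :
    tsSigma T x = x := by
  unfold tsSigma
  rw [if_neg]
  rintro ⟨y, hy, hxy⟩
  exact absurd (h.2 hy) (not_le.2 hxy)

lemma ts_rho_eq_of_least {T : Set ℝ} {x : ℝ} (h : IsLeast T x) :
    tsRho T x = x := by
  unfold tsRho
  rw [if_neg]
  rintro ⟨y, hy, hxy⟩
  exact absurd (h.2 hy) (not_le.2 hxy)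

lemma ts_sigma_rho_eq_of_lt {T : Set ℝ} {x : ℝ} (hx : x ∈ T)
    (h : tsRho T x < x) : tsSigma T (tsRho T x) = x := by
  have hne : ({y ∈ T | y < x}).Nonempty := by
    by_contra hne
    rw [tsRho, if_neg hne] at h
    exact lt_irrefl x h
  have hρ : tsRho T x = sSup {y ∈ T | y < x} := by rw [tsRho, if_pos hne]
  have hub : ∀ y ∈ T, tsRho T x < y → x ≤ y := by
    intro y hy hly
    by_contra hyx
    exact absurd (hρ ▸ le_csSup ⟨x, fun z hz => hz.2.le⟩ ⟨hy, not_le.1 hyx⟩)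
      (not_le.2 hly)
  have hmem : x ∈ {y ∈ T | tsRho T x < y} := ⟨hx, h⟩
  rw [tsSigma, if_pos ⟨x, hmem⟩]
  exact le_antisymm (csInf_le ⟨tsRho T x, fun y hy => hy.2.le⟩ hmem)
    (le_csInf ⟨x, hmem⟩ (fun y hy => hub y hy.1 hy.2))

lemma ts_rho_sigma_eq_of_lt {T : Set ℝ} {x : ℝ} (hx : x ∈ T)
    (h : x < tsSigma T x) : tsRho T (tsSigma T x) = x := by
  have hne : ({y ∈ T | x < y}).Nonempty := by
    by_contra hne
    rw [tsSigma, if_neg hne] at h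
    exact lt_irrefl x h
  have hσ : tsSigma T x = sInf {y ∈ T | x < y} := by rw [tsSigma, if_pos hne]
  have hub : ∀ y ∈ T, y < tsSigma T x → y ≤ x := by
    intro y hy hly
    by_contra hyx
    exact absurd (hσ ▸ csInf_le ⟨x, fun z hz => hz.2.le⟩ ⟨hy, not_le.1 hyx⟩)
      (not_le.2 hly)
  have hmem : x ∈ {y ∈ T | y < tsSigma T x} := ⟨hx, h⟩
  rw [tsRho, if_pos ⟨x, hmem⟩]
  exact le_antisymm (csSup_le ⟨x, hmem⟩ (fun y hy => hub y hy.1 hy.2))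
    (le_csSup ⟨tsSigma T x, fun y hy => hy.2.le⟩ hmem)

/-- a time scale `T` is regular if and only if:
(i) `min T` (if it exists) is right-dense and `max T` (if it exists) is
left-dense; (ii) every other point of `T` is either two-sided dense or
two-sided scattered. -/
theorem regular_iff (T : Set ℝ) (hT : T.Nonempty) (hTc : IsClosed T) :
    TsRegular T ↔
      ((∀ x, IsLeast T x → tsSigma T x = x) ∧
       (∀ x, IsGreatest T x → tsRho T x = x) ∧
       (∀ x ∈ T, ¬ IsLeast T x → ¬ IsGreatest T x →
          ((tsSigma T x = x ∧ tsRho T x = x) ∨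
           (x < tsSigma T x ∧ tsRho T x < x)))) := by
  constructor
  · intro hreg
    refine ⟨?_, ?_, ?_⟩
    · intro x hx
      have h := (hreg x hx.1).1
      rwa [ts_rho_eq_of_least hx] at h
    · intro x hx
      have h := (hreg x hx.1).2
      rwa [ts_sigma_eq_of_greatest hx] at h
    · intro x hx _ _
      rcases (ts_sigma_ge T x).eq_or_lt with hσ | hσ
      · rcases (ts_rho_le T x).lt_or_eq with hρ | hρ
        · exfalso
          have h := (hreg x hx).2
          rw [← hσ] at h
          exact absurd h (ne_of_lt hρ)
        · exact Or.inl ⟨hσ.symm, hρ⟩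
      · rcases (ts_rho_le T x).lt_or_eq with hρ | hρ
        · exact Or.inr ⟨hσ, hρ⟩
        · exfalso
          have h := (hreg x hx).1
          rw [hρ] at h
          exact absurd h (ne_of_gt hσ)
  · rintro ⟨h1, h2, h3⟩ x hx
    have key : ∀ y ∈ T, tsSigma T y = y ↔ tsRho T y = y := by
      intro y hy
      by_cases hl : IsLeast T y
      · simp [h1 y hl, ts_rho_eq_of_least hl]
      · by_cases hg : IsGreatest T y
        · simp [h2 y hg, ts_sigma_eq_of_greatest hg]
        · rcases h3 y hy hl hg with ⟨hσ, hρ⟩ | ⟨hσ, hρ⟩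
          · simp [hσ, hρ]
          · simp [ne_of_gt hσ, ne_of_lt hρ]
    constructor
    · rcases (ts_rho_le T x).lt_or_eq with hρ | hρ
      · exact ts_sigma_rho_eq_of_lt hx hρ
      · rw [hρ]
        exact (key x hx).2 hρ
    · rcases (ts_sigma_ge T x).eq_or_lt with hσ | hσ
      · rw [← hσ]
        exact (key x hx).1 hσ.symm
      · exact ts_rho_sigma_eq_of_lt hx hσ
end

section
/- For n ≥ 0, in the algebra of δ-differential operators on a regular time scale, δⁿ·f = Σ_{k=0}^{n} Σ (strings) (Δ^{i_{k+1}} E Δ^{i_k} E ⋯ Δ^{i_2} E Δ^{i_1})(f) · δᵏ, where the inner sum runs over all (i_1,…,i_{k+1}) with i_γ ≥ 0 and i_1 + ⋯ + i_{k+1} = n − k; i.e. it is the sum over all words in {Δ, E} containing n−k letters Δ and k letters E, each word applied to f and multiplied on the right by δᵏ. -/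
open scoped Classical

private theorem aux10 (A : Type*) [CommRing A] (E : A →+* A) (Δ : A →+ A)
    (hLeib : ∀ f g : A, Δ (f * g) = g * Δ f + E f * Δ g) :
    ∀ (n : ℕ) (f g : A),
    (fun a => Δ a)^[n] (f * g) =
      ∑ w : Fin n → Bool,
        (List.ofFn w).foldr (fun b a => if b then E a else Δ a) f *
          (fun a => Δ a)^[(Finset.univ.filter (fun i => w i = true)).card] g := by
  intro n
  induction n with
  | zero =>
    intro f g
    simp
  | succ n ih =>
    intro f g
    rw [Function.iterate_succ_apply', ih f g, map_sum]
    rw [← (Fin.consEquiv fun _ : Fin (n+1) => Bool).sum_comp]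
    rw [Fintype.sum_prod_type, Fintype.sum_bool]
    have hcount : ∀ (b : Bool) (w : Fin n → Bool),
        (Finset.univ.filter (fun i => (Fin.cons b w : Fin (n+1) → Bool) i = true)).card =
          (if b then 1 else 0) + (Finset.univ.filter (fun i => w i = true)).card := by
      intro b w
      simp only [Finset.card_filter]
      rw [Fin.sum_univ_succ]
      simp [Fin.cons_succ]
    have hword : ∀ (b : Bool) (w : Fin n → Bool),
        (List.ofFn (Fin.cons b w : Fin (n+1) → Bool)).foldr (fun b a => if b then E a else Δ a) f =
          (if b then E ((List.ofFn w).foldr (fun b a => if b then E a else Δ a) f)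
            else Δ ((List.ofFn w).foldr (fun b a => if b then E a else Δ a) f)) := by
      intro b w
      rw [List.ofFn_succ]
      simp [Fin.cons_succ]
    rw [← Finset.sum_add_distrib]
    apply Finset.sum_congr rfl
    intro w _
    simp only [Fin.consEquiv_apply]
    have e : ∀ b : Bool, List.ofFn ((Fin.consEquiv fun _ : Fin (n+1) => Bool) (b, w)) =
        List.ofFn (Fin.cons b w : Fin (n+1) → Bool) := fun b => rfl
    rw [e true, e false, hword true w, hword false w, hcount true w, hcount false w]
    have hf : (false = true) = False := by simp
    simp only [hf, if_false, if_true, zero_add, Nat.add_comm 1]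
    rw [hLeib, Function.iterate_succ_apply']
    ring

/-- Leibniz rule for nonnegative powers of `δ` in the algebra of
δ-differential operators on a regular time scale.  The setting is abstracted:
`A` is the commutative ring of Δ-smooth functions, `E` the shift ring
homomorphism and `Δ` the additive delta-derivative operator, subject to the
twisted Leibniz rule `Δ(fg) = gΔf + E(f)Δg` (equivalently `δf = Δf + E(f)δ`).
The operator identity `δⁿ·f = Σ_{k=0}^n Σ_{words} word(f)·δᵏ`, where the inner
sum runs over all words in `{Δ, E}` with `n−k` letters `Δ` and `k` letters `E`,
is expressed by applying both sides to an arbitrary `g ∈ A` (words are encoded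
as `w : Fin n → Bool`, `true ↦ E`, `false ↦ Δ`). -/
theorem delta_pow_leibniz (A : Type*) [CommRing A] (E : A →+* A) (Δ : A →+ A)
    (hLeib : ∀ f g : A, Δ (f * g) = g * Δ f + E f * Δ g) (n : ℕ) (f g : A) :
    (fun a => Δ a)^[n] (f * g) =
      ∑ k ∈ Finset.range (n + 1),
        ∑ w ∈ Finset.univ.filter
            (fun w : Fin n → Bool => (Finset.univ.filter (fun i => w i = true)).card = k),
          (List.ofFn w).foldr (fun b a => if b then E a else Δ a) f *
            (fun a => Δ a)^[k] g := by
  rw [aux10 A E Δ hLeib n f g]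
  rw [← Finset.sum_fiberwise_of_maps_to (g := fun w : Fin n → Bool =>
    (Finset.univ.filter (fun i => w i = true)).card) (t := Finset.range (n+1))
    (fun w _ => by
      simp only [Finset.mem_range]
      exact Nat.lt_succ_of_le (le_trans (Finset.card_filter_le _ _) (by simp)))]
  apply Finset.sum_congr rfl
  intro k _
  apply Finset.sum_congr rfl
  intro w hw
  simp only [Finset.mem_filter] at hw
  rw [hw.2]
end

section
/- In the algebra of formal series in δ⁻¹ over Δ-smooth functions on a regular time scale, δ⁻¹·f = Σ_{k=0}^{∞} (−1)^k ((E⁻¹Δ)^k E⁻¹)(f) · δ^{−k−1}, where E⁻¹ is the backward shift. -/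
/-!
The recursion `Δ c_k + E c_{k+1} = 0` says `c_{k+1} = -(E⁻¹Δ) c_k`, so the coefficients are
the orbit of `c₀ = E⁻¹ f` under the odd map `-(E⁻¹Δ)`; oddness lets the sign `(-1)^k` be
pulled out of the `k`-th iterate.
-/

lemma apply_neg_one_pow_mul_of_odd {A : Type*} [Ring A] {T : A → A} (hT : ∀ a, T (-a) = -T a)
    (k : ℕ) (x : A) : T ((-1) ^ k * x) = (-1) ^ k * T x := by
  rcases neg_one_pow_eq_or A k with h | h <;> simp [h, hT]

lemma iterate_neg_apply_of_odd {A : Type*} [Ring A] {T : A → A} (hT : ∀ a, T (-a) = -T a)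
    (k : ℕ) (x : A) : (fun a => -T a)^[k] x = (-1) ^ k * T^[k] x := by
  induction k with
  | zero => simp
  | succ k ih =>
    rw [Function.iterate_succ_apply', Function.iterate_succ_apply', ih,
      apply_neg_one_pow_mul_of_odd hT, pow_succ', neg_one_mul, neg_mul]

lemma eq_iterate_of_succ {α : Type*} {g : α → α} {u : ℕ → α} (hu : ∀ k, u (k + 1) = g (u k))
    (k : ℕ) : u k = g^[k] (u 0) := by
  induction k with
  | zero => rfl
  | succ k ih => rw [hu, ih, Function.iterate_succ_apply']

lemma add_apply_eq_zero_iff {A : Type*} [AddCommGroup A] (E : A ≃+ A) (Δ : A →+ A) (c c' : A) :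
    Δ c + E c' = 0 ↔ c' = -E.symm (Δ c) := by
  rw [← map_neg, AddEquiv.eq_symm_apply, eq_neg_iff_add_eq_zero, add_comm]

/-- Writing `δ⁻¹ f = Σ_{k≥0} c_k δ^{−k−1}` and comparing coefficients in `δ · δ⁻¹ f = f` with
`δ c = Δ c + E(c) δ` gives the system `E(c₀) = f`, `Δ(c_k) + E(c_{k+1}) = 0`. -/
theorem delta_inv_leibniz (A : Type*) [CommRing A] (E : A ≃+* A) (Δ : A →+ A) (f : A) :
    (E ((fun k : ℕ => (-1 : A) ^ k * (fun a => E.symm (Δ a))^[k] (E.symm f)) 0) = f ∧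
      ∀ k : ℕ,
        Δ ((fun k : ℕ => (-1 : A) ^ k * (fun a => E.symm (Δ a))^[k] (E.symm f)) k) +
          E ((fun k : ℕ => (-1 : A) ^ k * (fun a => E.symm (Δ a))^[k] (E.symm f)) (k + 1)) = 0) ∧
    ∀ d : ℕ → A, (E (d 0) = f ∧ ∀ k : ℕ, Δ (d k) + E (d (k + 1)) = 0) →
      ∀ k : ℕ, d k = (-1 : A) ^ k * (fun a => E.symm (Δ a))^[k] (E.symm f) := by
  set T : A → A := fun a => E.symm (Δ a)
  have hT : ∀ a, T (-a) = -T a := fun a => by simp [T]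
  have recursion_iff (c c' : A) : Δ c + E c' = 0 ↔ c' = -T c :=
    add_apply_eq_zero_iff E.toAddEquiv Δ c c'
  simp only [← iterate_neg_apply_of_odd hT]
  refine ⟨⟨by simp, fun k => (recursion_iff _ _).2 (Function.iterate_succ_apply' _ _ _)⟩, ?_⟩
  rintro d ⟨h0, hrec⟩ k
  rw [eq_iterate_of_succ (g := fun a => -T a) (fun k => (recursion_iff _ _).1 (hrec k)) k,
    ← h0, E.symm_apply_apply]
end

section
/- Let R : G → G be a linear map on a Lie algebra G satisfying the modified Yang–Baxter equation [Ra, Rb] − R([Ra,b] + [a,Rb]) + α[a,b] = 0 for some scalar α. Then the bracket [a,b]_R := [Ra,b] + [a,Rb] satisfies the Jacobi identity, hence is a second Lie bracket on G (so R is a classical R-matrix). -/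
/-- if a linear map `R` on a Lie algebra satisfies the modified
Yang–Baxter equation `[Ra,Rb] − R([Ra,b]+[a,Rb]) + α[a,b] = 0`, then the
R-bracket `[a,b]_R = [Ra,b] + [a,Rb]` satisfies the Jacobi identity, hence is a
second Lie bracket (so `R` is a classical R-matrix). -/
theorem r_matrix_jacobi (K : Type*) [Field K] [CharZero K]
    (G : Type*) [LieRing G] [LieAlgebra K G]
    (R : G →ₗ[K] G) (α : K)
    (hYB : ∀ a b : G, ⁅R a, R b⁆ - R (⁅R a, b⁆ + ⁅a, R b⁆) + α • ⁅a, b⁆ = 0) :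
    ∀ a b c : G,
      (⁅R (⁅R a, b⁆ + ⁅a, R b⁆), c⁆ + ⁅⁅R a, b⁆ + ⁅a, R b⁆, R c⁆) +
      (⁅R (⁅R b, c⁆ + ⁅b, R c⁆), a⁆ + ⁅⁅R b, c⁆ + ⁅b, R c⁆, R a⁆) +
      (⁅R (⁅R c, a⁆ + ⁅c, R a⁆), b⁆ + ⁅⁅R c, a⁆ + ⁅c, R a⁆, R b⁆) = 0 := by
  have key : ∀ a b : G, R (⁅R a, b⁆ + ⁅a, R b⁆) = ⁅R a, R b⁆ + α • ⁅a, b⁆ := by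
    intro a b
    have h2 : R (⁅R a, b⁆ + ⁅a, R b⁆) - (⁅R a, R b⁆ + α • ⁅a, b⁆) = 0 := by
      rw [← neg_eq_zero, ← hYB a b]; abel
    exact sub_eq_zero.mp h2
  have j : ∀ x y z : G, ⁅⁅x, y⁆, z⁆ + ⁅⁅y, z⁆, x⁆ + ⁅⁅z, x⁆, y⁆ = 0 := by
    intro x y z
    have s1 : ⁅⁅x, y⁆, z⁆ = -⁅z, ⁅x, y⁆⁆ := (lie_skew _ _).symm
    have s2 : ⁅⁅y, z⁆, x⁆ = -⁅x, ⁅y, z⁆⁆ := (lie_skew _ _).symm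
    have s3 : ⁅⁅z, x⁆, y⁆ = -⁅y, ⁅z, x⁆⁆ := (lie_skew _ _).symm
    linear_combination (norm := module) s1 + s2 + s3 - lie_jacobi x y z
  intro a b c
  simp only [key, add_lie, lie_add, smul_lie]
  linear_combination (norm := module) j (R a) (R b) c + j (R a) b (R c) +
    j a (R b) (R c) + α • j a b c
end

section
/- Let G be an associative algebra with commutator bracket, and R a classical R-matrix on G satisfying the Yang–Baxter equation YB(α). Suppose L = L(t₁, t₂, …) ∈ G evolves by the Lax hierarchy dL/dtₙ = [R(Lⁿ), L], with R commuting with the time derivatives. Then the flows commute: d/dtₙ(dL/dtₘ) = d/dtₘ(dL/dtₙ) for all m, n, as a consequence of the zero-curvature equations (R Lᵐ)_{tₙ} − (R Lⁿ)_{tₘ} + [R Lᵐ, R Lⁿ] = 0. -/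
/-- commutation of the flows of the Lax hierarchy.  `G` is an
associative algebra with commutator Lie bracket, `R` a classical R-matrix
satisfying the Yang–Baxter equation YB(α).  The time evolutions are modelled
formally by derivations `d n` of `G` (the derivatives `∂/∂tₙ`), commuting with
`R`, and `L ∈ G` evolves by the Lax hierarchy `dL/dtₙ = [R(Lⁿ), L]`.  Then the
zero-curvature equations `(RLᵐ)_{tₙ} − (RLⁿ)_{tₘ} + [RLᵐ, RLⁿ] = 0` hold and
the flows commute: `d n (d m L) = d m (d n L)`. -/
theorem lax_flows_commute (K : Type*) [CommRing K] (G : Type*) [Ring G] [Algebra K G]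
    (α : K) (R : G →ₗ[K] G)
    (hYB : ∀ a b : G,
      (R a * R b - R b * R a) - R ((R a * b - b * R a) + (a * R b - R b * a)) +
        α • (a * b - b * a) = 0)
    (d : ℕ → G →ₗ[K] G)
    (hderiv : ∀ n, ∀ x y : G, d n (x * y) = d n x * y + x * d n y)
    (hcommR : ∀ n, ∀ x : G, d n (R x) = R (d n x))
    (L : G)
    (hLax : ∀ n : ℕ, 1 ≤ n → d n L = R (L ^ n) * L - L * R (L ^ n)) :
    ∀ m n : ℕ, 1 ≤ m → 1 ≤ n →
      (d n (R (L ^ m)) - d m (R (L ^ n)) +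
        (R (L ^ m) * R (L ^ n) - R (L ^ n) * R (L ^ m)) = 0) ∧
      d n (d m L) = d m (d n L) := by
  intro m n hm hn
  have hd1 : ∀ k, d k (1 : G) = 0 := by
    intro k
    have h := hderiv k 1 1
    simpa using h
  -- the derivative of any power of L
  have hpow : ∀ k, 1 ≤ k → ∀ j : ℕ,
      d k (L ^ j) = R (L ^ k) * L ^ j - L ^ j * R (L ^ k) := by
    intro k hk j
    induction j with
    | zero => simp [hd1]
    | succ j ih =>
      rw [pow_succ, hderiv, ih, hLax k hk]
      noncomm_ring
  have hdA : d n (R (L ^ m)) = R (R (L ^ n) * L ^ m - L ^ m * R (L ^ n)) := by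
    rw [hcommR, hpow n hn m]
  have hdB : d m (R (L ^ n)) = R (R (L ^ m) * L ^ n - L ^ n * R (L ^ m)) := by
    rw [hcommR, hpow m hm n]
  -- zero curvature, via Yang-Baxter with a = L^m, b = L^n
  have hZC0 : R (R (L ^ n) * L ^ m - L ^ m * R (L ^ n))
      - R (R (L ^ m) * L ^ n - L ^ n * R (L ^ m))
      + (R (L ^ m) * R (L ^ n) - R (L ^ n) * R (L ^ m)) = 0 := by
    have h := hYB (L ^ m) (L ^ n)
    rw [pow_mul_comm, sub_self, smul_zero, add_zero] at h
    simp only [map_add, map_sub] at h ⊢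
    calc R (R (L ^ n) * L ^ m) - R (L ^ m * R (L ^ n))
          - (R (R (L ^ m) * L ^ n) - R (L ^ n * R (L ^ m)))
          + (R (L ^ m) * R (L ^ n) - R (L ^ n) * R (L ^ m))
        = R (L ^ m) * R (L ^ n) - R (L ^ n) * R (L ^ m)
          - (R (R (L ^ m) * L ^ n) - R (L ^ n * R (L ^ m))
            + (R (L ^ m * R (L ^ n)) - R (R (L ^ n) * L ^ m))) := by abel
      _ = 0 := h
  have hZC : d n (R (L ^ m)) - d m (R (L ^ n)) +
      (R (L ^ m) * R (L ^ n) - R (L ^ n) * R (L ^ m)) = 0 := by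
    rw [hdA, hdB]; exact hZC0
  refine ⟨hZC, ?_⟩
  -- commutation of the flows
  have h1 : R (R (L ^ n) * L ^ m - L ^ m * R (L ^ n))
      = R (R (L ^ m) * L ^ n - L ^ n * R (L ^ m))
        - (R (L ^ m) * R (L ^ n) - R (L ^ n) * R (L ^ m)) := by
    have h2 : R (R (L ^ n) * L ^ m - L ^ m * R (L ^ n))
        - (R (R (L ^ m) * L ^ n - L ^ n * R (L ^ m))
          - (R (L ^ m) * R (L ^ n) - R (L ^ n) * R (L ^ m))) = 0 := by
      calc R (R (L ^ n) * L ^ m - L ^ m * R (L ^ n))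
          - (R (R (L ^ m) * L ^ n - L ^ n * R (L ^ m))
            - (R (L ^ m) * R (L ^ n) - R (L ^ n) * R (L ^ m)))
          = R (R (L ^ n) * L ^ m - L ^ m * R (L ^ n))
            - R (R (L ^ m) * L ^ n - L ^ n * R (L ^ m))
            + (R (L ^ m) * R (L ^ n) - R (L ^ n) * R (L ^ m)) := by abel
        _ = 0 := hZC0
    exact sub_eq_zero.mp h2
  rw [hLax m hm, hLax n hn, map_sub, map_sub, hderiv, hderiv, hderiv, hderiv,
    hLax m hm, hLax n hn, hdA, hdB, h1]
  noncomm_ring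
end

section
/- Suppose δʳ·F = Σ_{i=0}^{r} Cᵢ δ^{r−i} holds in the algebra of δ-differential operators on a regular time scale, with r > 0 and F a Δ-smooth function. Then Σ_{i=0}^{r} (−μ)ⁱ Cᵢ = F, where μ is the graininess function. -/
/-- The coefficients `Cᵢ` in the expansion `δʳ·F = Σ_{i=0}^r Cᵢ δ^{r−i}` in the
algebra of δ-differential operators (`δf = Δf + E(f)δ`), defined by the
recursion coming from `δ^{r+1}F = δʳ(EF)·δ + δʳ(ΔF)`. -/
def deltaExpCoeff {A : Type*} [CommRing A] (E Δ : A → A) : ℕ → ℕ → A → A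
  | 0, 0, F => F
  | 0, _ + 1, _ => 0
  | r + 1, 0, F => deltaExpCoeff E Δ r 0 (E F)
  | r + 1, i + 1, F => deltaExpCoeff E Δ r (i + 1) (E F) + deltaExpCoeff E Δ r i (Δ F)

lemma deltaExpCoeff_eq_zero {A : Type*} [CommRing A] (E Δ : A → A) :
    ∀ (r i : ℕ), r < i → ∀ F : A, deltaExpCoeff E Δ r i F = 0 := by
  intro r
  induction r with
  | zero =>
    intro i hi F
    match i, hi with
    | i + 1, _ => rfl
  | succ r ih =>
    intro i hi F
    match i, hi with
    | i + 1, hi =>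
      show deltaExpCoeff E Δ r (i + 1) (E F) + deltaExpCoeff E Δ r i (Δ F) = 0
      rw [ih (i + 1) (by omega), ih i (by omega), add_zero]

lemma delta_pow_coeff_sum_aux (A : Type*) [CommRing A] (E Δ : A → A) (μ : A)
    (hE : ∀ f : A, E f = f + μ * Δ f) :
    ∀ (r : ℕ) (F : A),
    ∑ i ∈ Finset.range (r + 1), (-μ) ^ i * deltaExpCoeff E Δ r i F = F := by
  intro r
  induction r with
  | zero => intro F; simp [deltaExpCoeff]
  | succ r ih =>
    intro F
    rw [Finset.sum_range_succ' _ (r + 1)]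
    have hsplit : ∀ i ∈ Finset.range (r + 1),
        (-μ) ^ (i + 1) * deltaExpCoeff E Δ (r + 1) (i + 1) F
          = (-μ) ^ (i + 1) * deltaExpCoeff E Δ r (i + 1) (E F)
            + (-μ) * ((-μ) ^ i * deltaExpCoeff E Δ r i (Δ F)) := by
      intro i _
      show (-μ) ^ (i + 1) * (deltaExpCoeff E Δ r (i + 1) (E F)
            + deltaExpCoeff E Δ r i (Δ F)) = _
      ring
    rw [Finset.sum_congr rfl hsplit, Finset.sum_add_distrib, ← Finset.mul_sum]
    have h2 : (-μ) * ∑ i ∈ Finset.range (r + 1),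
        (-μ) ^ i * deltaExpCoeff E Δ r i (Δ F) = -μ * Δ F := by rw [ih]
    have h1 : ∑ i ∈ Finset.range (r + 1),
        (-μ) ^ (i + 1) * deltaExpCoeff E Δ r (i + 1) (E F)
          = E F - deltaExpCoeff E Δ r 0 (E F) := by
      rw [Finset.sum_range_succ, deltaExpCoeff_eq_zero E Δ r (r + 1) (by omega),
        mul_zero, add_zero]
      have := ih (E F)
      rw [Finset.sum_range_succ' _ r] at this
      simp only [pow_zero, one_mul] at this
      linear_combination this
    have h0 : (-μ) ^ 0 * deltaExpCoeff E Δ (r + 1) 0 F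
        = deltaExpCoeff E Δ r 0 (E F) := by
      simp [deltaExpCoeff]
    rw [h1, h2, h0, hE F]
    ring

/-- Lemma 1 of the paper: if `δʳ·F = Σ_{i=0}^r Cᵢ δ^{r−i}` with
`r > 0`, then `Σ_{i=0}^r (−μ)ⁱ Cᵢ = F`.  The setting is abstracted: `A` is the
commutative ring of Δ-smooth functions on a regular time scale, `E` the shift,
`Δ` the delta derivative and `μ` the graininess, subject to the twisted Leibniz
rule `Δ(fg) = gΔf + E(f)Δg` and the key identity `Ef = f + μΔf`. -/
theorem delta_pow_coeff_sum (A : Type*) [CommRing A] (E Δ : A → A) (μ : A)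
    (hLeib : ∀ f g : A, Δ (f * g) = g * Δ f + E f * Δ g)
    (hE : ∀ f : A, E f = f + μ * Δ f)
    (r : ℕ) (hr : 0 < r) (F : A) :
    ∑ i ∈ Finset.range (r + 1), (-μ) ^ i * deltaExpCoeff E Δ r i F = F := by
  exact delta_pow_coeff_sum_aux A E Δ μ hE r F
end
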